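/- arXiv:1510.04849 — 2 statements merged into one kernel-verified Lean document; each statement's English description precedes it below -/
import Mathlib

section
/- Two Cauchy sequences u, v in A* (with respect to the profinite metric) are equivalent (distance 0) if and only if the associated ultrafilters F_u and F_v on the regular languages coincide, where F_u = {L regular | ∃n₀ ∀n ≥ n₀ : u_n ∈ L}. -/
/-- A finite monoid of cardinality k separates the words x and y if some monoid morphism
from the free monoid into it distinguishes them. -/
def SeparatesCard (A : Type) (k : ℕ) (x y : List A) : Prop :=
  ∃ (M : Type) (_ : Monoid M) (_ : Fintype M), Fintype.card M = k ∧
    ∃ φ : FreeMonoid A →* M, φ x ≠ φ y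

open Classical in
/-- The profinite metric d(x,y) = 2^{-min{|M| : M separates x and y}} on A*. -/
noncomputable def pdist {A : Type} (x y : List A) : ℝ :=
  if h : {k : ℕ | SeparatesCard A k x y}.Nonempty then
    ((2 : ℝ) ^ (sInf {k : ℕ | SeparatesCard A k x y}))⁻¹
  else 0

/-- A Cauchy sequence of words with respect to the profinite metric. -/
def IsPCauchy {A : Type} (u : ℕ → List A) : Prop :=
  ∀ ε : ℝ, 0 < ε → ∃ N : ℕ, ∀ m n : ℕ, N ≤ m → N ≤ n → pdist (u m) (u n) < ε

/-- A language is regular iff it is recognized by a finite monoid. -/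
def RegularLang {A : Type} (L : Set (List A)) : Prop :=
  ∃ (M : Type) (_ : Monoid M) (_ : Fintype M) (φ : FreeMonoid A →* M) (S : Set M),
    L = φ ⁻¹' S

/-- The set of regular languages eventually containing the sequence u. -/
def Fu {A : Type} (u : ℕ → List A) : Set (Set (List A)) :=
  {L | RegularLang L ∧ ∃ n₀ : ℕ, ∀ n : ℕ, n₀ ≤ n → u n ∈ L}

/-!
Both conditions say that, for every finite monoid `M`, the words `u n` and `v n` eventually
have the same image in `M`. For `d(u n, v n) → 0` to follow from `F_u = F_v` this has to hold
uniformly in the morphism, and it does: every monoid with at most `k` elements embeds into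
`Function.End (Fin k)` (Cayley), and since `A` is finite there are only finitely many morphisms
`A* → Function.End (Fin k)`. For each of them `u` is eventually constant, because it is Cauchy,
and the regular language of words with that image lies in `F_u = F_v`.
-/

open Filter Topology

section Profinite

variable {A : Type}

theorem SeparatesCard.symm {k : ℕ} {x y : List A} (h : SeparatesCard A k x y) :
    SeparatesCard A k y x :=
  let ⟨M, iM, iF, hc, φ, hφ⟩ := h
  ⟨M, iM, iF, hc, φ, hφ.symm⟩

theorem pdist_comm (x y : List A) : pdist x y = pdist y x := by
  have h : {k | SeparatesCard A k x y} = {k | SeparatesCard A k y x} :=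
    Set.ext fun _ => ⟨SeparatesCard.symm, SeparatesCard.symm⟩
  rw [pdist, pdist, h]

theorem pdist_nonneg (x y : List A) : 0 ≤ pdist x y := by
  unfold pdist
  split <;> positivity

theorem inv_two_pow_le_pdist {k : ℕ} {x y : List A} (h : SeparatesCard A k x y) :
    ((2 : ℝ) ^ k)⁻¹ ≤ pdist x y := by
  rw [pdist, dif_pos ⟨k, h⟩]
  exact inv_anti₀ (by positivity) (pow_le_pow_right₀ one_le_two (Nat.sInf_le h))

theorem pdist_le_inv_two_pow {k : ℕ} {x y : List A}
    (h : ∀ c < k, ¬SeparatesCard A c x y) : pdist x y ≤ ((2 : ℝ) ^ k)⁻¹ := by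
  unfold pdist
  split
  case isTrue hne =>
    have hk : k ≤ sInf {c | SeparatesCard A c x y} :=
      not_lt.mp fun hlt => h _ hlt (Nat.sInf_mem hne)
    exact inv_anti₀ (by positivity) (pow_le_pow_right₀ one_le_two hk)
  case isFalse => positivity

theorem map_eq_of_pdist_lt {M : Type} [Monoid M] [Fintype M] (φ : FreeMonoid A →* M)
    {x y : List A} (h : pdist x y < ((2 : ℝ) ^ Fintype.card M)⁻¹) : φ x = φ y := by
  by_contra hne
  exact (inv_two_pow_le_pdist ⟨M, _, _, rfl, φ, hne⟩).not_gt h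

theorem eventually_map_eq_of_tendsto_pdist {u v : ℕ → List A}
    (h : Tendsto (fun n => pdist (u n) (v n)) atTop (𝓝 0))
    {M : Type} [Monoid M] [Fintype M] (φ : FreeMonoid A →* M) :
    ∀ᶠ n in atTop, φ (u n) = φ (v n) :=
  (h.eventually (gt_mem_nhds (by positivity))).mono fun _ => map_eq_of_pdist_lt φ

theorem IsPCauchy.exists_eventually_map_eq {u : ℕ → List A} (hu : IsPCauchy u)
    {M : Type} [Monoid M] [Fintype M] (φ : FreeMonoid A →* M) :
    ∃ c, ∀ᶠ n in atTop, φ (u n) = c := by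
  obtain ⟨N, hN⟩ := hu _ (by positivity : (0 : ℝ) < ((2 : ℝ) ^ Fintype.card M)⁻¹)
  exact ⟨φ (u N), eventually_atTop.mpr
    ⟨N, fun n hn => map_eq_of_pdist_lt φ (hN n N hn le_rfl)⟩⟩

theorem mem_Fu_iff {u : ℕ → List A} {L : Set (List A)} :
    L ∈ Fu u ↔ RegularLang L ∧ ∀ᶠ n in atTop, u n ∈ L := by
  rw [eventually_atTop]; rfl

theorem regularLang_preimage {M : Type} [Monoid M] [Fintype M] (φ : FreeMonoid A →* M)
    (S : Set M) : RegularLang (φ ⁻¹' S : Set (List A)) :=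
  ⟨M, inferInstance, inferInstance, φ, S, rfl⟩

theorem Fu_subset_of_tendsto_pdist {u v : ℕ → List A}
    (h : Tendsto (fun n => pdist (u n) (v n)) atTop (𝓝 0)) : Fu u ⊆ Fu v := by
  rintro L hL
  obtain ⟨⟨M, _, _, φ, S, rfl⟩, hu⟩ := mem_Fu_iff.mp hL
  refine mem_Fu_iff.mpr ⟨regularLang_preimage φ S, ?_⟩
  filter_upwards [hu, eventually_map_eq_of_tendsto_pdist h φ] with n hn heq
  exact show φ (v n) ∈ S from heq ▸ hn

theorem IsPCauchy.eventually_map_eq_of_Fu_subset {u v : ℕ → List A} (hu : IsPCauchy u)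
    (h : Fu u ⊆ Fu v) {M : Type} [Monoid M] [Fintype M] (φ : FreeMonoid A →* M) :
    ∀ᶠ n in atTop, φ (u n) = φ (v n) := by
  obtain ⟨c, hc⟩ := hu.exists_eventually_map_eq φ
  have hL : (φ ⁻¹' {c} : Set (List A)) ∈ Fu u :=
    mem_Fu_iff.mpr ⟨regularLang_preimage φ {c}, hc⟩
  filter_upwards [hc, (mem_Fu_iff.mp (h hL)).2] with n hu hv
  exact hu.trans hv.symm

theorem IsPCauchy.eventually_forall_map_eq_of_Fu_subset [Finite A] {u v : ℕ → List A}
    (hu : IsPCauchy u) (h : Fu u ⊆ Fu v) (M : Type) [Monoid M] [Fintype M] :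
    ∀ᶠ n in atTop, ∀ φ : FreeMonoid A →* M, φ (u n) = φ (v n) :=
  have : Finite (FreeMonoid A →* M) := .of_equiv _ FreeMonoid.lift
  eventually_all.mpr (hu.eventually_map_eq_of_Fu_subset h)

end Profinite

section Cayley

variable {M α : Type} [Monoid M]

noncomputable def endOfEmbedding (j : M ↪ α) : M →* Function.End α where
  toFun g := Function.extend j (fun m => j (g * m)) id
  map_one' := by
    funext x
    by_cases hx : ∃ m, j m = x
    · obtain ⟨m, rfl⟩ := hx
      simp only [j.injective.extend_apply, one_mul]
      rfl
    · exact Function.extend_apply' _ _ _ hx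
  map_mul' g h := by
    funext x
    change _ = Function.extend j (fun m => j (g * m)) id
      (Function.extend j (fun m => j (h * m)) id x)
    by_cases hx : ∃ m, j m = x
    · obtain ⟨m, rfl⟩ := hx
      simp [j.injective.extend_apply, mul_assoc]
    · simp only [Function.extend_apply' _ _ _ hx, id]

theorem endOfEmbedding_apply_one (j : M ↪ α) (g : M) : endOfEmbedding j g (j 1) = j g := by
  change Function.extend j (fun m => j (g * m)) id (j 1) = j g
  rw [j.injective.extend_apply, mul_one]

theorem endOfEmbedding_injective (j : M ↪ α) : Function.Injective (endOfEmbedding j) :=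
  fun g h hgh => j.injective <| by
    rw [← endOfEmbedding_apply_one j g, ← endOfEmbedding_apply_one j h, hgh]

end Cayley

instance {α : Type} [Fintype α] [DecidableEq α] : Fintype (Function.End α) :=
  inferInstanceAs (Fintype (α → α))

theorem SeparatesCard.exists_end_fin {A : Type} {c k : ℕ} {x y : List A}
    (h : SeparatesCard A c x y) (hck : c ≤ k) :
    ∃ ψ : FreeMonoid A →* Function.End (Fin k), ψ x ≠ ψ y := by
  obtain ⟨M, _, _, rfl, φ, hφ⟩ := h
  obtain ⟨j⟩ := Function.Embedding.nonempty_of_card_le (hck.trans (Fintype.card_fin k).ge)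
  exact ⟨(endOfEmbedding j).comp φ, (endOfEmbedding_injective j).ne hφ⟩

theorem tendsto_zero_of_eventually_le_inv_two_pow {f : ℕ → ℝ} (h0 : ∀ n, 0 ≤ f n)
    (h : ∀ k : ℕ, ∀ᶠ n in atTop, f n ≤ ((2 : ℝ) ^ k)⁻¹) :
    Tendsto f atTop (𝓝 0) := by
  have hlim : Tendsto (fun k : ℕ => ((2 : ℝ) ^ k)⁻¹) atTop (𝓝 0) :=
    tendsto_inv_atTop_zero.comp (tendsto_pow_atTop_atTop_of_one_lt one_lt_two)
  refine tendsto_order.mpr ⟨fun a ha => .of_forall fun n => ha.trans_le (h0 n), fun a ha => ?_⟩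
  obtain ⟨k, hk⟩ := (hlim.eventually (gt_mem_nhds ha)).exists
  exact (h k).mono fun n hn => hn.trans_lt hk

theorem stmt7_general {A : Type} [Fintype A] (u v : ℕ → List A)
    (hu : IsPCauchy u) :
    Filter.Tendsto (fun n => pdist (u n) (v n)) Filter.atTop (nhds 0) ↔ Fu u = Fu v := by
  constructor
  · intro h
    have h' : Tendsto (fun n => pdist (v n) (u n)) atTop (𝓝 0) := by
      simpa only [pdist_comm] using h
    exact (Fu_subset_of_tendsto_pdist h).antisymm (Fu_subset_of_tendsto_pdist h')
  · intro h
    refine tendsto_zero_of_eventually_le_inv_two_pow (fun n => pdist_nonneg _ _) fun k => ?_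
    filter_upwards [hu.eventually_forall_map_eq_of_Fu_subset h.subset (Function.End (Fin k))]
      with n hn
    refine pdist_le_inv_two_pow fun c hc hsep => ?_
    obtain ⟨ψ, hψ⟩ := hsep.exists_end_fin hc.le
    exact hψ (hn ψ)

/-- Two Cauchy sequences u, v in A* (profinite metric) are equivalent
(distance 0, i.e. lim d(u_n,v_n) = 0) iff the associated ultrafilters F_u and F_v on
the regular languages coincide. -/
theorem stmt7 {A : Type} [Fintype A] (u v : ℕ → List A)
    (hu : IsPCauchy u) (hv : IsPCauchy v) :
    Filter.Tendsto (fun n => pdist (u n) (v n)) Filter.atTop (nhds 0) ↔ Fu u = Fu v :=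
  stmt7_general u v hu
end

section
/- Let V be a variety of languages, τ_D : A* → (A × D)* the length-preserving transduction associated to a finite partition D of ℕ², and let (V □ P_arb)_A be the Boolean algebra generated by all τ_D⁻¹(L) with L ∈ V_{A×D}. Then for ultrafilters μ, ν on A*: the equation [μ ↔ ν] holds for (V □ P_arb)_A if and only if for every finite partition D of ℕ², the equation [βτ_D(μ) ↔ βτ_D(ν)] holds for V_{A×D}. -/
/-- The ℕ-transduction associated with a finite partition of ℕ² (presented as a class map
d : ℕ² → Fin k): the i-th letter of τ_D(w) is (w_i, class of (i, |w|−i−1)). -/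
def tauD {A : Type} {k : ℕ} (d : ℕ × ℕ → Fin k) (w : List A) : List (A × Fin k) :=
  w.mapIdx (fun i a => (a, d (i, w.length - i - 1)))

/-- The Boolean algebra generated by a family G of subsets of X. -/
inductive GenBA {X : Type} (G : Set (Set X)) : Set X → Prop
  | base : ∀ s ∈ G, GenBA G s
  | empty : GenBA G ∅
  | compl : ∀ s, GenBA G s → GenBA G sᶜ
  | union : ∀ s t, GenBA G s → GenBA G t → GenBA G (s ∪ t)

theorem Ultrafilter.mem_iff_of_genBA {X : Type} {G : Set (Set X)} {μ ν : Ultrafilter X}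
    (hG : ∀ s ∈ G, s ∈ μ ↔ s ∈ ν) {S : Set X} (hS : GenBA G S) : S ∈ μ ↔ S ∈ ν := by
  induction hS with
  | base s hs => exact hG s hs
  | empty => simp
  | compl s _ ih => simp only [Ultrafilter.compl_mem_iff_notMem, ih]
  | union s t _ _ ihs iht => simp only [Ultrafilter.union_mem_iff, ihs, iht]

/-- Let V assign to each alphabet A × D (D a finite partition of ℕ², with
class map d : ℕ² → Fin k) a Boolean algebra V k of languages, and let (V □ P_arb)_A be
the Boolean algebra generated by all τ_D⁻¹(L), L ∈ V_{A×D}.  For ultrafilters μ, ν on A*,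
the equation [μ ↔ ν] holds for (V □ P_arb)_A iff for every finite partition D of ℕ² the
equation [βτ_D(μ) ↔ βτ_D(ν)] holds for V_{A×D}. -/
theorem stmt13 {A : Type} (V : (k : ℕ) → Set (Set (List (A × Fin k))))
    (μ ν : Ultrafilter (List A)) :
    (∀ S : Set (List A),
        GenBA {S | ∃ (k : ℕ) (d : ℕ × ℕ → Fin k) (L : Set (List (A × Fin k))),
          L ∈ V k ∧ S = tauD d ⁻¹' L} S →
        (S ∈ μ ↔ S ∈ ν)) ↔
    (∀ (k : ℕ) (d : ℕ × ℕ → Fin k), ∀ L ∈ V k,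
        (L ∈ Ultrafilter.map (tauD d) μ ↔ L ∈ Ultrafilter.map (tauD d) ν)) := by
  simp only [Ultrafilter.mem_map]
  constructor
  · intro h k d L hL
    exact h _ (GenBA.base _ ⟨k, d, L, hL, rfl⟩)
  · intro h S hS
    refine Ultrafilter.mem_iff_of_genBA ?_ hS
    rintro _ ⟨k, d, L, hL, rfl⟩
    exact h k d L hL
end
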